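/- arXiv:2002.00096 — 3 statements merged into one kernel-verified Lean document; each statement's English description precedes it below -/
import Mathlib

section
/- Fix real T > 0 and δ > 0, and let s, w be complex numbers with |Im(s)|, |Im(w)| ≤ T and (k-1)/2 < Re(s), Re(w) and Re(s) + Re(w) < k - δ. Then as k → ∞ through even integers, (2π)^{k-s-w} Γ(w) / Γ(k-s) → 0, uniformly on this region. -/
open Complex Filter Topology Real MeasureTheory

/-!
Put `z = k - s - w`, so that `k - s = w + z`, `δ < Re z < 1` and `|Im z| ≤ 2T`. Then
`Γ(w) / Γ(w + z) = B(w, z) / Γ(z)`. As `1/Γ` is entire, `1/|Γ(z)|` is bounded on this compact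
range of `z`, and `|(2π)^z| ≤ 2π`. Comparing the Beta integral with the real one
`B(Re w, δ) = Γ(Re w) Γ(δ) / Γ(Re w + δ)` and using the log-convexity of `Γ` (Wendel's inequality)
gives `|B(w, z)| ≤ Γ(δ) (Re w + δ - 1)^(-δ)`, which tends to `0` because `Re w > (k - 1)/2`.
-/

namespace Real

theorem Gamma_add_le_rpow_mul_Gamma {x s : ℝ} (hx : 0 < x) (hs₀ : 0 ≤ s) (hs₁ : s ≤ 1) :
    Gamma (x + s) ≤ x ^ s * Gamma x := by
  have hΓx := Gamma_pos_of_pos hx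
  have hconv := convexOn_log_Gamma.2 (Set.mem_Ioi.2 hx) (Set.mem_Ioi.2 (by linarith : 0 < x + 1))
    (sub_nonneg.2 hs₁) hs₀ (sub_add_cancel 1 s)
  have hcomb : (1 - s) * x + s * (x + 1) = x + s := by ring
  simp only [Function.comp_apply, smul_eq_mul, hcomb, Gamma_add_one hx.ne',
    log_mul hx.ne' hΓx.ne'] at hconv
  rw [← log_le_log_iff (Gamma_pos_of_pos (by linarith)) (by positivity),
    log_mul (by positivity) hΓx.ne', log_rpow hx]
  linarith

theorem integral_rpow_mul_one_sub_rpow {u v : ℝ} (hu : 0 < u) (hv : 0 < v) :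
    ∫ x in (0 : ℝ)..1, x ^ (u - 1) * (1 - x) ^ (v - 1) = Gamma u * Gamma v / Gamma (u + v) := by
  apply ofReal_injective
  have hcast :
      betaIntegral u v = ((∫ x in (0 : ℝ)..1, x ^ (u - 1) * (1 - x) ^ (v - 1) : ℝ) : ℂ) := by
    rw [betaIntegral, ← intervalIntegral.integral_ofReal]
    refine intervalIntegral.integral_congr fun x hx => ?_
    rw [Set.uIcc_of_le zero_le_one] at hx
    simp only [ofReal_mul, ofReal_cpow hx.1, ofReal_cpow (sub_nonneg.2 hx.2)]
    push_cast
    rfl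
  rw [← hcast, betaIntegral_eq_Gamma_mul_div _ _ (by simpa) (by simpa), ← ofReal_add,
    Gamma_ofReal, Gamma_ofReal, Gamma_ofReal]
  push_cast
  rfl

theorem Gamma_mul_Gamma_div_Gamma_add_le {u d : ℝ} (hd : 0 < d) (hd₁ : d ≤ 1)
    (hud : 1 < u + d) : Gamma u * Gamma d / Gamma (u + d) ≤ Gamma d * (u + d - 1) ^ (-d) := by
  set x := u + d - 1
  have hx : 0 < x := by linarith
  have hΓ : Gamma (u + d) = x * Gamma x := by rw [← Gamma_add_one hx.ne', sub_add_cancel]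
  have hW := Gamma_add_le_rpow_mul_Gamma hx (sub_nonneg.2 hd₁) (by linarith)
  rw [show x + (1 - d) = u by ring, rpow_sub hx, rpow_one] at hW
  have := Gamma_pos_of_pos hx
  have := Gamma_pos_of_pos hd
  rw [hΓ, rpow_neg hx.le, div_le_iff₀ (by positivity)]
  calc Gamma u * Gamma d ≤ x / x ^ d * Gamma x * Gamma d := by gcongr
    _ = Gamma d * (x ^ d)⁻¹ * (x * Gamma x) := by ring

end Real

namespace Complex

theorem norm_betaIntegral_le {u v : ℂ} {d : ℝ} (hu : 0 < u.re) (hd : 0 < d) (hdv : d ≤ v.re) :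
    ‖betaIntegral u v‖ ≤ Real.Gamma u.re * Real.Gamma d / Real.Gamma (u.re + d) := by
  have hpos : 0 < Real.Gamma u.re * Real.Gamma d / Real.Gamma (u.re + d) := by
    have := Real.Gamma_pos_of_pos hu
    have := Real.Gamma_pos_of_pos hd
    have := Real.Gamma_pos_of_pos (add_pos hu hd)
    positivity
  rw [← Real.integral_rpow_mul_one_sub_rpow hu hd] at hpos ⊢
  -- a non-integrable function would have integral `0`
  refine intervalIntegral.norm_integral_le_of_norm_le zero_le_one ?_
    (intervalIntegral.intervalIntegrable_of_integral_ne_zero hpos.ne')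
  filter_upwards [Measure.ae_ne volume 1] with x hx1 ⟨hx0, hx1'⟩
  have h1x : 0 < 1 - x := sub_pos.2 (lt_of_le_of_ne hx1' hx1)
  rw [norm_mul, norm_cpow_eq_rpow_re_of_pos hx0, ← ofReal_one, ← ofReal_sub,
    norm_cpow_eq_rpow_re_of_pos h1x]
  simp only [sub_re, ofReal_re]
  exact mul_le_mul_of_nonneg_left
    (Real.rpow_le_rpow_of_exponent_ge h1x (by linarith) (by linarith)) (by positivity)

theorem exists_norm_inv_Gamma_le (R : ℝ) : ∃ C, ∀ z : ℂ, ‖z‖ ≤ R → ‖(Gamma z)⁻¹‖ ≤ C := by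
  obtain ⟨C, hC⟩ := (isCompact_closedBall (0 : ℂ) R).exists_bound_of_continuousOn
    differentiable_one_div_Gamma.continuous.continuousOn
  exact ⟨C, fun z hz => hC z (mem_closedBall_zero_iff.2 hz)⟩

theorem norm_ofReal_cpow_le {a : ℝ} {z : ℂ} (ha : 1 ≤ a) (hz : z.re ≤ 1) :
    ‖(a : ℂ) ^ z‖ ≤ a := by
  rw [norm_cpow_eq_rpow_re_of_pos (by linarith)]
  simpa using Real.rpow_le_rpow_of_exponent_le ha hz

theorem norm_Gamma_div_Gamma_add_le {w z : ℂ} {d : ℝ} (hd : 0 < d) (hdz : d ≤ z.re)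
    (hd₁ : d ≤ 1) (hw : 1 < w.re + d) :
    ‖Gamma w / Gamma (w + z)‖ ≤ ‖(Gamma z)⁻¹‖ * Real.Gamma d * (w.re + d - 1) ^ (-d) := by
  have hw₀ : 0 < w.re := by linarith
  have hz₀ : 0 < z.re := hd.trans_le hdz
  have hbeta : Gamma w / Gamma (w + z) = betaIntegral w z * (Gamma z)⁻¹ := by
    rw [betaIntegral_eq_Gamma_mul_div _ _ hw₀ hz₀]
    field_simp [Gamma_ne_zero_of_re_pos hz₀]
  rw [hbeta, norm_mul, mul_assoc, mul_comm]
  gcongr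
  exact (norm_betaIntegral_le hw₀ hd hdz).trans (Real.Gamma_mul_Gamma_div_Gamma_add_le hd hd₁ hw)

end Complex

theorem gamma_ratio_tendsto_zero_general (T δ : ℝ) (hδ : 0 < δ) :
    ∀ ε > 0, ∃ K : ℕ, ∀ k : ℕ, Even k → K ≤ k → ∀ s w : ℂ,
      |s.im| ≤ T → |w.im| ≤ T →
      ((k : ℝ) - 1) / 2 < s.re → ((k : ℝ) - 1) / 2 < w.re →
      s.re + w.re < (k : ℝ) - δ →
      ‖(2 * Real.pi : ℂ) ^ ((k : ℂ) - s - w) * Complex.Gamma w / Complex.Gamma ((k : ℂ) - s)‖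
        < ε := by
  intro ε hε
  obtain ⟨C, hC⟩ := exists_norm_inv_Gamma_le (1 + 2 * T)
  have hdecay : Tendsto (fun k : ℕ => 2 * π * (C * Real.Gamma δ *
      ((k : ℝ) / 2 + (δ - 3 / 2)) ^ (-δ))) atTop (𝓝 0) := by
    simpa using (((tendsto_rpow_neg_atTop hδ).comp <|
      tendsto_atTop_add_const_right _ (δ - 3 / 2) <| tendsto_natCast_atTop_atTop.atTop_div_const
        two_pos).const_mul (C * Real.Gamma δ)).const_mul (2 * π)
  obtain ⟨K, hK⟩ := eventually_atTop.1
    ((hdecay.eventually (gt_mem_nhds hε)).and (eventually_ge_atTop 3))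
  refine ⟨K, fun k _ hkK s w hs hw hsre hwre hsw => (?_ : _ ≤ _).trans_lt (hK k hkK).1⟩
  have hk : (3 : ℝ) ≤ k := by exact_mod_cast (hK k hkK).2
  set z := (k : ℂ) - s - w with hz
  have hzre : z.re = k - s.re - w.re := by simp [hz]
  have hzre₀ : δ < z.re := by linarith
  have hzre₁ : z.re < 1 := by linarith
  have hzim : |z.im| ≤ 2 * T := by
    rw [show z.im = -s.im - w.im by simp [hz], abs_le]
    constructor <;> linarith [abs_le.1 hs, abs_le.1 hw]
  have hzC : ‖(Gamma z)⁻¹‖ ≤ C :=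
    hC z <| (norm_le_abs_re_add_abs_im z).trans <| by rw [abs_of_pos (hδ.trans hzre₀)]; linarith
  rw [show (k : ℂ) - s = w + z by rw [hz]; ring, mul_div_assoc, norm_mul]
  have h2π : ‖(2 * π : ℂ) ^ z‖ ≤ 2 * π := by
    exact_mod_cast norm_ofReal_cpow_le (by linarith [pi_gt_three]) hzre₁.le
  have hratio := norm_Gamma_div_Gamma_add_le hδ hzre₀.le (hzre₀.trans hzre₁).le
    (by linarith : 1 < w.re + δ)
  have hmono : (w.re + δ - 1) ^ (-δ) ≤ ((k : ℝ) / 2 + (δ - 3 / 2)) ^ (-δ) :=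
    Real.rpow_le_rpow_of_nonpos (by linarith) (by linarith) (by linarith)
  have := Real.rpow_nonneg (by linarith : 0 ≤ w.re + δ - 1) (-δ)
  have := (norm_nonneg _).trans hzC
  refine mul_le_mul h2π (hratio.trans ?_) (norm_nonneg _) two_pi_pos.le
  gcongr

/-- Uniformly on the region `|Im s|,|Im w| ≤ T`, `(k-1)/2 < Re s, Re w`,
`Re s + Re w < k - δ`, one has `(2π)^{k-s-w} Γ(w)/Γ(k-s) → 0` as even `k → ∞`. -/
theorem gamma_ratio_tendsto_zero (T δ : ℝ) (hT : 0 < T) (hδ : 0 < δ) :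
    ∀ ε > 0, ∃ K : ℕ, ∀ k : ℕ, Even k → K ≤ k → ∀ s w : ℂ,
      |s.im| ≤ T → |w.im| ≤ T →
      ((k : ℝ) - 1) / 2 < s.re → ((k : ℝ) - 1) / 2 < w.re →
      s.re + w.re < (k : ℝ) - δ →
      ‖(2 * Real.pi : ℂ) ^ ((k : ℂ) - s - w) * Complex.Gamma w / Complex.Gamma ((k : ℂ) - s)‖
        < ε :=
  gamma_ratio_tendsto_zero_general T δ hδ
end

section
/- Fix real T > 0 and δ > 0. For z in the region k/2 - 1/2 ≤ Re(z) ≤ k/2 - δ, |Im(z)| ≤ T, the function g(z) = (2π)^{k-2z} Γ(z)/Γ(k-z) satisfies sup_z |g'(z)| → 0 as k → ∞ through even integers. -/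
/-!
For `x = Re w` and `c = k - 2x > 0` we have `k - w = conj (w + c)`, so the Beta integral gives
`‖Γ(w) / Γ(k - w)‖ ≤ Γ(x) / Γ(x + c)`. Log-convexity of `Γ` bounds this by `2 x^(-d)` whenever
`0 < d ≤ c` (with `d < 1`), while `‖(2π)^(k - 2w)‖ = (2π)^c` stays bounded. So `g = O(k^(-d))`
uniformly on a strip slightly wider than the region, and Cauchy's estimate on discs of radius
`d / 2` transfers this bound to `g'`.
-/

open Complex ComplexConjugate Filter Topology
open scoped Real

theorem Real.Gamma_add_one_le_rpow_mul_Gamma_add {x d : ℝ} (hx : 0 < x) (hd0 : 0 < d)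
    (hd1 : d < 1) : Real.Gamma (x + 1) ≤ (x + d) ^ (1 - d) * Real.Gamma (x + d) := by
  have hxd : 0 < x + d := by linarith
  have hconv := Real.Gamma_mul_add_mul_le_rpow_Gamma_mul_rpow_Gamma hxd
    (by linarith : 0 < x + d + 1) hd0 (sub_pos.2 hd1) (add_sub_cancel d 1)
  have hG := (Real.Gamma_pos_of_pos hxd).le
  calc Real.Gamma (x + 1) = Real.Gamma (d * (x + d) + (1 - d) * (x + d + 1)) := by ring_nf
    _ ≤ Real.Gamma (x + d) ^ d * Real.Gamma (x + d + 1) ^ (1 - d) := hconv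
    _ = (x + d) ^ (1 - d) * Real.Gamma (x + d) := by
      rw [Real.Gamma_add_one hxd.ne', Real.mul_rpow hxd.le hG, ← mul_assoc,
        mul_comm _ ((x + d) ^ _), mul_assoc, ← Real.rpow_add' hG (by norm_num), add_sub_cancel,
        Real.rpow_one]

theorem Real.Gamma_div_Gamma_add_le_two_mul_rpow_neg {x c d : ℝ} (hx : 2 ≤ x) (hd0 : 0 < d)
    (hd1 : d < 1) (hdc : d ≤ c) : Real.Gamma x / Real.Gamma (x + c) ≤ 2 * x ^ (-d) := by
  have hx0 : 0 < x := by linarith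
  have hxd : 0 < x + d := by linarith
  have hGxd := Real.Gamma_pos_of_pos hxd
  have hmono : Real.Gamma (x + d) ≤ Real.Gamma (x + c) :=
    Real.Gamma_strictMonoOn_Ici.monotoneOn (by simp; linarith) (by simp; linarith) (by linarith)
  have hrpow : (x + d) ^ (1 - d) ≤ 2 * x ^ (1 - d) := calc
    (x + d) ^ (1 - d) ≤ (2 * x) ^ (1 - d) := by gcongr; linarith
    _ = 2 ^ (1 - d) * x ^ (1 - d) := Real.mul_rpow (by norm_num) hx0.le
    _ ≤ 2 ^ (1 : ℝ) * x ^ (1 - d) := by gcongr <;> linarith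
    _ = 2 * x ^ (1 - d) := by rw [Real.rpow_one]
  calc Real.Gamma x / Real.Gamma (x + c) ≤ Real.Gamma x / Real.Gamma (x + d) := by gcongr
    _ = Real.Gamma (x + 1) / Real.Gamma (x + d) / x := by
        rw [Real.Gamma_add_one hx0.ne']; field_simp
    _ ≤ (x + d) ^ (1 - d) / x := by
        gcongr
        rw [div_le_iff₀ hGxd]
        exact Real.Gamma_add_one_le_rpow_mul_Gamma_add hx0 hd0 hd1
    _ ≤ 2 * x ^ (1 - d) / x := by gcongr
    _ = 2 * x ^ (-d) := by
        rw [sub_eq_add_neg, Real.rpow_add hx0, Real.rpow_one]; field_simp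

theorem Complex.norm_betaIntegral_le_s10 (u v : ℂ) :
    ‖betaIntegral u v‖ ≤ ‖betaIntegral u.re v.re‖ := by
  set f : ℝ → ℂ := fun t => (t : ℂ) ^ (u - 1) * (1 - (t : ℂ)) ^ (v - 1)
  have hre : betaIntegral u.re v.re = ∫ t in (0 : ℝ)..1, ((‖f t‖ : ℝ) : ℂ) := by
    rw [betaIntegral]
    refine intervalIntegral.integral_congr_ae ?_
    filter_upwards [MeasureTheory.Measure.ae_ne MeasureTheory.volume 1] with t ht1 ht
    rw [Set.uIoc_of_le zero_le_one] at ht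
    have ht0 : 0 < t := ht.1
    have ht1' : 0 < 1 - t := sub_pos.2 (lt_of_le_of_ne ht.2 ht1)
    simp only [f, norm_mul, norm_cpow_eq_rpow_re_of_pos ht0]
    rw [show (1 : ℂ) - t = ((1 - t : ℝ) : ℂ) by push_cast; rfl, norm_cpow_eq_rpow_re_of_pos ht1',
      ofReal_mul, ofReal_cpow ht0.le, ofReal_cpow ht1'.le]
    simp
  rw [hre, intervalIntegral.integral_ofReal, norm_real, Real.norm_eq_abs]
  exact (intervalIntegral.norm_integral_le_integral_norm zero_le_one).trans (le_abs_self _)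

theorem Complex.norm_Gamma_div_Gamma_add_le_s10 {w : ℂ} {c : ℝ} (hw : 0 < w.re) (hc : 0 < c) :
    ‖Gamma w / Gamma (w + c)‖ ≤ Real.Gamma w.re / Real.Gamma (w.re + c) := by
  have hGc := Real.Gamma_pos_of_pos hc
  have hbeta : ∀ u : ℂ, 0 < u.re →
      Gamma u / Gamma (u + c) = betaIntegral u c / Real.Gamma c := by
    intro u hu
    rw [betaIntegral_eq_Gamma_mul_div u c hu (by simpa using hc), ← Gamma_ofReal]
    field_simp [Gamma_ne_zero_of_re_pos (show 0 < (c : ℂ).re by simpa using hc)]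
  have hreal := hbeta w.re (by simpa using hw)
  rw [← ofReal_add, Gamma_ofReal, Gamma_ofReal, ← ofReal_div,
    eq_div_iff (by exact_mod_cast hGc.ne')] at hreal
  rw [hbeta w hw, norm_div, norm_real, Real.norm_of_nonneg hGc.le, div_le_iff₀ hGc]
  calc ‖betaIntegral w c‖ ≤ ‖betaIntegral w.re c‖ := by simpa using norm_betaIntegral_le_s10 w c
    _ = Real.Gamma w.re / Real.Gamma (w.re + c) * Real.Gamma c := by
      rw [← hreal, ← ofReal_mul, norm_real, Real.norm_of_nonneg (by positivity)]

noncomputable def gammaQuotient (s : ℝ) (z : ℂ) : ℂ :=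
  (2 * π : ℂ) ^ ((s : ℂ) - 2 * z) * Gamma z / Gamma (s - z)

theorem norm_gammaQuotient_le {s : ℝ} {w : ℂ} (hw : 0 < w.re) (hs : 2 * w.re < s) :
    ‖gammaQuotient s w‖ ≤
      (2 * π) ^ (s - 2 * w.re) * (Real.Gamma w.re / Real.Gamma (s - w.re)) := by
  set c := s - 2 * w.re
  have hc : 0 < c := sub_pos.2 hs
  have hconj : (s : ℂ) - w = conj (w + c) := by
    apply Complex.ext <;> simp [c]; ring
  have hpow : ‖(2 * π : ℂ) ^ ((s : ℂ) - 2 * w)‖ = (2 * π) ^ c := by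
    rw [show (2 * π : ℂ) = ((2 * π : ℝ) : ℂ) by push_cast; rfl,
      norm_cpow_eq_rpow_re_of_pos (by positivity)]
    simp [c]
  rw [gammaQuotient, mul_div_assoc, norm_mul, hpow, norm_div, hconj, Gamma_conj, norm_conj,
    ← norm_div, show s - w.re = w.re + c by ring]
  gcongr
  exact norm_Gamma_div_Gamma_add_le_s10 hw hc

theorem norm_gammaQuotient_le_of_mem_strip {s d : ℝ} {w : ℂ} (hd0 : 0 < d) (hd1 : d < 1)
    (hw : 2 ≤ w.re) (hds : d ≤ s - 2 * w.re) (hs2 : s - 2 * w.re ≤ 2) :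
    ‖gammaQuotient s w‖ ≤ (2 * π) ^ (2 : ℝ) * (2 * w.re ^ (-d)) := by
  have hGamma : Real.Gamma w.re / Real.Gamma (s - w.re) ≤ 2 * w.re ^ (-d) := by
    rw [show s - w.re = w.re + (s - 2 * w.re) by ring]
    exact Real.Gamma_div_Gamma_add_le_two_mul_rpow_neg hw hd0 hd1 hds
  refine (norm_gammaQuotient_le (by linarith) (by linarith)).trans ?_
  have hGamma_nonneg : 0 ≤ Real.Gamma w.re / Real.Gamma (s - w.re) :=
    div_nonneg (Real.Gamma_pos_of_pos (by linarith)).le (Real.Gamma_pos_of_pos (by linarith)).le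
  gcongr
  linarith [Real.pi_gt_three]

theorem Complex.differentiableAt_Gamma_of_re_pos {w : ℂ} (hw : 0 < w.re) :
    DifferentiableAt ℂ Gamma w := by
  refine differentiableAt_Gamma w fun m hm => ?_
  have := congrArg re hm
  simp at this
  linarith [(m.cast_nonneg : (0 : ℝ) ≤ m)]

theorem differentiableAt_gammaQuotient {s : ℝ} {w : ℂ} (hw : 0 < w.re) (hws : w.re < s) :
    DifferentiableAt ℂ (gammaQuotient s) w := by
  have hsw : 0 < ((s : ℂ) - w).re := by simpa using hws
  refine DifferentiableAt.div ?_ ?_ (Gamma_ne_zero_of_re_pos hsw)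
  · have h2π : (2 * π : ℂ) ≠ 0 := by simp [Real.pi_ne_zero]
    exact ((differentiableAt_id.const_mul _).const_sub _ |>.const_cpow (Or.inl h2π)).mul
      (differentiableAt_Gamma_of_re_pos hw)
  · exact (differentiableAt_Gamma_of_re_pos hsw).comp w (by fun_prop)

theorem norm_deriv_gammaQuotient_le {s d : ℝ} {z : ℂ} (hd0 : 0 < d) (hd1 : d < 1) (hs : 6 ≤ s)
    (hz1 : s / 2 - 1 / 2 ≤ z.re) (hz2 : z.re ≤ s / 2 - d) :
    ‖deriv (gammaQuotient s) z‖ ≤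
      (2 * π) ^ (2 : ℝ) * (2 * (s / 2 - 1) ^ (-d)) / (d / 2) := by
  have hball : ∀ w ∈ Metric.closedBall z (d / 2), s / 2 - 1 ≤ w.re ∧ w.re ≤ s / 2 - d / 2 := by
    intro w hw
    have := (abs_re_le_norm (w - z)).trans (mem_closedBall_iff_norm.1 hw)
    rw [sub_re, abs_le] at this
    constructor <;> linarith
  refine norm_deriv_le_of_forall_mem_sphere_norm_le (by positivity) ?_ fun w hw => ?_
  · refine DifferentiableOn.diffContOnCl fun w hw => ?_
    rw [closure_ball z (by positivity)] at hw
    obtain ⟨hw1, hw2⟩ := hball w hw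
    exact (differentiableAt_gammaQuotient (by linarith) (by linarith)).differentiableWithinAt
  · obtain ⟨hw1, hw2⟩ := hball w (Metric.sphere_subset_closedBall hw)
    refine (norm_gammaQuotient_le_of_mem_strip hd0 hd1 (by linarith) (by linarith)
      (by linarith)).trans ?_
    gcongr _ * (2 * ?_)
    exact Real.rpow_le_rpow_of_nonpos (by linarith) hw1 (by linarith)

theorem sup_deriv_gamma_quotient_tendsto_zero_general (T δ : ℝ) (hδ : 0 < δ) :
    ∀ ε > 0, ∃ K : ℕ, ∀ k : ℕ, Even k → K ≤ k → ∀ z : ℂ,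
      (k : ℝ) / 2 - 1 / 2 ≤ z.re → z.re ≤ (k : ℝ) / 2 - δ → |z.im| ≤ T →
      ‖deriv (fun z : ℂ => (2 * Real.pi : ℂ) ^ ((k : ℂ) - 2 * z)
          * Complex.Gamma z / Complex.Gamma ((k : ℂ) - z)) z‖ < ε := by
  intro ε hε
  set d := min δ (1 / 2)
  have hd0 : 0 < d := lt_min hδ (by norm_num)
  have hd1 : d < 1 := (min_le_right _ _).trans_lt (by norm_num)
  have hbound : Tendsto (fun s : ℝ => (2 * π) ^ (2 : ℝ) * (2 * (s / 2 - 1) ^ (-d)) / (d / 2))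
      atTop (𝓝 0) := by
    have := (tendsto_rpow_neg_atTop hd0).comp
      (tendsto_atTop_add_const_right _ (-1) (tendsto_id.atTop_div_const two_pos))
    simpa [sub_eq_add_neg] using
      ((this.const_mul 2).const_mul ((2 * π) ^ (2 : ℝ))).div_const (d / 2)
  obtain ⟨K, hK⟩ := eventually_atTop.1 <|
    ((hbound.comp tendsto_natCast_atTop_atTop).eventually (gt_mem_nhds hε)).and
      (eventually_ge_atTop 6)
  refine ⟨K, fun k _ hk z hz1 hz2 _ => ?_⟩
  have hg : (fun z : ℂ => (2 * π : ℂ) ^ ((k : ℂ) - 2 * z) * Gamma z / Gamma ((k : ℂ) - z)) =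
      gammaQuotient k := by
    funext; simp [gammaQuotient]
  rw [hg]
  exact (norm_deriv_gammaQuotient_le hd0 hd1 (by exact_mod_cast (hK k hk).2) hz1
    (hz2.trans (by linarith [min_le_left δ (1 / 2)]))).trans_lt (hK k hk).1

/-- On the region `k/2 - 1/2 ≤ Re z ≤ k/2 - δ`, `|Im z| ≤ T`, the supremum of
`|g'(z)|` for `g(z) = (2π)^{k-2z} Γ(z)/Γ(k-z)` tends to `0` as even `k → ∞`. -/
theorem sup_deriv_gamma_quotient_tendsto_zero (T δ : ℝ) (hT : 0 < T) (hδ : 0 < δ) :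
    ∀ ε > 0, ∃ K : ℕ, ∀ k : ℕ, Even k → K ≤ k → ∀ z : ℂ,
      (k : ℝ) / 2 - 1 / 2 ≤ z.re → z.re ≤ (k : ℝ) / 2 - δ → |z.im| ≤ T →
      ‖deriv (fun z : ℂ => (2 * Real.pi : ℂ) ^ ((k : ℂ) - 2 * z)
          * Complex.Gamma z / Complex.Gamma ((k : ℂ) - z)) z‖ < ε :=
  sup_deriv_gamma_quotient_tendsto_zero_general T δ hδ
end

section
/- For every integer n ≥ 1, the set of 2×2 integer matrices of determinant n equals the set of matrices of the form [[ar, nb₀/r + (t+rℓ)a], [cr, nd₀/r + (t+rℓ)c]] where r ranges over positive divisors of n, (a,c) ranges over coprime pairs of integers (not both zero), b₀, d₀ are integers fixed (depending on (a,c)) with ad₀ - b₀c = 1, t ranges over Z/rZ (lifted to {0,...,r-1}), and ℓ ranges over Z; moreover distinct parameter tuples give distinct matrices. -/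
/-!
The first column of `γ` is `r • (a, c)` with `r` the gcd of its entries and `(a, c)` coprime, and
this decomposition is unique. Since `det γ = r (a D - c B)`, the number `r` divides `n`, and the
second column `(B, D)` satisfies `a D - c B = n / r`; such columns form the line
`(n / r) (b₀, d₀) + ℤ (a, c)`, the coefficient being `s = d₀ B - b₀ D`. Division with remainder
writes `s = t + r ℓ` uniquely.
-/

open Matrix

lemma Int.exists_isCoprime_mul_eq_of_ne_zero {A C : ℤ} (h : A ≠ 0 ∨ C ≠ 0) :
    ∃ a c r : ℤ, IsCoprime a c ∧ 0 < r ∧ a * r = A ∧ c * r = C := by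
  obtain ⟨g, a, c, hg, hac, rfl, rfl⟩ := Int.exists_gcd_one' (Int.gcd_pos_iff.mpr h)
  exact ⟨a, c, g, Int.isCoprime_iff_gcd_eq_one.mpr hac, by exact_mod_cast hg, rfl, rfl⟩

lemma Int.eq_of_isCoprime_of_mul_eq_mul {a c a' c' r r' : ℤ} (h : IsCoprime a c)
    (h' : IsCoprime a' c') (hr : 0 < r) (hr' : 0 < r') (ha : a * r = a' * r')
    (hc : c * r = c' * r') : r = r' ∧ a = a' ∧ c = c' := by
  have habs : r.natAbs = r'.natAbs := by
    have hgcd := congrArg₂ Int.gcd ha hc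
    rwa [Int.gcd_mul_right, Int.gcd_mul_right, Int.isCoprime_iff_gcd_eq_one.mp h,
      Int.isCoprime_iff_gcd_eq_one.mp h', one_mul, one_mul] at hgcd
  obtain rfl : r = r' := by omega
  exact ⟨rfl, mul_right_cancel₀ hr.ne' ha, mul_right_cancel₀ hr.ne' hc⟩

lemma IsCoprime.eq_of_mul_eq_mul {R : Type*} [CommRing R] {a c x y : R} (h : IsCoprime a c)
    (ha : x * a = y * a) (hc : x * c = y * c) : x = y := by
  obtain ⟨u, v, huv⟩ := h
  linear_combination u * ha + v * hc - (x - y) * huv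

lemma Int.eq_of_add_mul_eq_add_mul {r t t' l l' : ℤ} (ht₀ : 0 ≤ t) (ht : t < r) (ht₀' : 0 ≤ t')
    (ht' : t' < r) (h : t + r * l = t' + r * l') : t = t' ∧ l = l' := by
  have hr : 0 < r := by omega
  obtain ⟨hl, ht⟩ := (Int.ediv_emod_unique hr).mpr ⟨rfl, ht₀, ht⟩
  obtain ⟨hl', ht'⟩ := (Int.ediv_emod_unique hr).mpr ⟨h.symm, ht₀', ht'⟩
  exact ⟨ht.symm.trans ht', hl.symm.trans hl'⟩

section SecondColumn

variable {R : Type*} [CommRing R] {a c b₀ d₀ : R}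

lemma det_mul_add_mul_eq (hbd : a * d₀ - b₀ * c = 1) (r m s : R) :
    !![a * r, m * b₀ + s * a; c * r, m * d₀ + s * c].det = r * m := by
  rw [det_fin_two_of]
  linear_combination r * m * hbd

lemma exists_eq_mul_add_mul_of_det_eq (hbd : a * d₀ - b₀ * c = 1) {B D m : R}
    (h : a * D - c * B = m) : ∃ s, m * b₀ + s * a = B ∧ m * d₀ + s * c = D :=
  ⟨d₀ * B - b₀ * D, by linear_combination B * hbd - b₀ * h,
    by linear_combination D * hbd - d₀ * h⟩

end SecondColumn

/-- Parametrization of integral `2×2` matrices of determinant `n`: fixing for every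
coprime pair `(a,c)` integers `(b₀,d₀)` with `a d₀ - b₀ c = 1`, the map
`((a,c),(r,t,ℓ)) ↦ [[ar, (n/r)b₀ + (t+rℓ)a], [cr, (n/r)d₀ + (t+rℓ)c]]`
is a bijection from the set of parameters `(a,c)` coprime, `r > 0`, `r ∣ n`,
`0 ≤ t < r`, `ℓ ∈ ℤ` onto the set of integer matrices of determinant `n`. -/
theorem det_n_matrix_parametrization (n : ℤ) (hn : 1 ≤ n)
    (bd : ℤ × ℤ → ℤ × ℤ)
    (hbd : ∀ a c : ℤ, IsCoprime a c → a * (bd (a, c)).2 - (bd (a, c)).1 * c = 1) :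
    Set.BijOn
      (fun q : (ℤ × ℤ) × ℤ × ℤ × ℤ =>
        !![q.1.1 * q.2.1, (n / q.2.1) * (bd q.1).1 + (q.2.2.1 + q.2.1 * q.2.2.2) * q.1.1;
           q.1.2 * q.2.1, (n / q.2.1) * (bd q.1).2 + (q.2.2.1 + q.2.1 * q.2.2.2) * q.1.2])
      {q : (ℤ × ℤ) × ℤ × ℤ × ℤ |
        IsCoprime q.1.1 q.1.2 ∧ 0 < q.2.1 ∧ q.2.1 ∣ n ∧ 0 ≤ q.2.2.1 ∧ q.2.2.1 < q.2.1}
      {γ : Matrix (Fin 2) (Fin 2) ℤ | γ.det = n} := by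
  refine ⟨?_, ?_, ?_⟩
  · rintro ⟨⟨a, c⟩, r, t, l⟩ ⟨hac, hr, ⟨m, rfl⟩, -, -⟩
    simp only [Set.mem_ofPred_eq, Int.mul_ediv_cancel_left m hr.ne']
    exact det_mul_add_mul_eq (hbd a c hac) r m _
  · rintro ⟨⟨a, c⟩, r, t, l⟩ ⟨hac, hr, -, ht0, htr⟩ ⟨⟨a', c'⟩, r', t', l'⟩
      ⟨hac', hr', -, ht0', htr'⟩ hM
    dsimp only at hac hr ht0 htr hac' hr' ht0' htr'
    simp only [← Matrix.ext_iff, Fin.forall_fin_two, of_apply, cons_val', cons_val_zero,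
      cons_val_one, empty_val', cons_val_fin_one] at hM
    obtain ⟨⟨h00, h01⟩, h10, h11⟩ := hM
    obtain ⟨rfl, rfl, rfl⟩ := Int.eq_of_isCoprime_of_mul_eq_mul hac hac' hr hr' h00 h10
    have hs : t + r * l = t' + r * l' := hac.eq_of_mul_eq_mul (by linarith) (by linarith)
    obtain ⟨rfl, rfl⟩ := Int.eq_of_add_mul_eq_add_mul ht0 htr ht0' htr' hs
    rfl
  · intro γ (hγ : γ.det = n)
    have hcol : γ 0 0 ≠ 0 ∨ γ 1 0 ≠ 0 := by
      by_contra! h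
      rw [det_fin_two, h.1, h.2] at hγ
      omega
    obtain ⟨a, c, r, hac, hr, hA, hC⟩ := Int.exists_isCoprime_mul_eq_of_ne_zero hcol
    have hrn : n = r * (a * γ 1 1 - c * γ 0 1) := by
      rw [← hγ, det_fin_two, ← hA, ← hC]
      ring
    obtain ⟨s, hB, hD⟩ := exists_eq_mul_add_mul_of_det_eq (hbd a c hac)
      (by rw [hrn, Int.mul_ediv_cancel_left _ hr.ne'] : a * γ 1 1 - c * γ 0 1 = n / r)
    refine ⟨((a, c), r, s % r, s / r),
      ⟨hac, hr, ⟨_, hrn⟩, Int.emod_nonneg s hr.ne', Int.emod_lt_of_pos s hr⟩, ?_⟩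
    simp only [Int.emod_add_mul_ediv, hA, hB, hC, hD]
    exact (eta_fin_two γ).symm
end
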